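/- arXiv:1304.3613 — 2 statements merged into one kernel-verified Lean document; each statement's English description precedes it below -/
import Mathlib

section
/- Let Π be an instance of NotAllEqual 3-SAT with n clauses and G(Π)=(V,E), b, r the associated construction. In every (b,r)-partition of E, for every variable x and any two consecutive v-vertices v^{C}_x and v^{D}_x on the cycle Δ_x (one from an original-clause gadget, the other from a copy gadget), the matching edges u^{C}_x v^{C}_x and u^{D}_x v^{D}_x belong to different spanning trees. -/
/-!
Common definitions for formalizing the NP-completeness reduction from
NotAllEqual 3-SAT to (b,r)-partitions of graphs.

An instance of NotAllEqual 3-SAT with variables in `α` and `n` clauses is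
given by `cl : Fin n → Fin 3 → α`, clause `i` consisting of the three
(distinct) variables `cl i 0, cl i 1, cl i 2`.

The vertex set of the associated graph `G(Π)`: the special vertex `s`,
the `u`-vertices `u i o j` and the `v`-vertices `v i o j`, where `i : Fin n`
is a clause index, `o : Bool` tells whether we are in the gadget of the
original clause (`false`) or of its copy (`true`), and `j : Fin 3` is the
position of a variable inside the clause.
-/

inductive GVert (n : ℕ) : Type
  | s : GVert n
  | u : Fin n → Bool → Fin 3 → GVert n
  | v : Fin n → Bool → Fin 3 → GVert n
  deriving DecidableEq

/-- The occurrences of the variable `x`: the pairs (clause index, position)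
where `x` appears. -/
def occs {α : Type*} [DecidableEq α] {n : ℕ} (cl : Fin n → Fin 3 → α) (x : α) :
    Finset (Fin n × Fin 3) :=
  Finset.univ.filter (fun p => cl p.1 p.2 = x)

/-- The cyclic successor of an occurrence `p` among the occurrences of the
variable sitting at `p`; this is used to build the cycle `Δ_x`. -/
noncomputable def nextOcc {α : Type*} [DecidableEq α] {n : ℕ}
    (cl : Fin n → Fin 3 → α) (p : Fin n × Fin 3) : Fin n × Fin 3 :=
  (occs cl (cl p.1 p.2)).toList.next p (by simp [occs, Finset.mem_toList])

/-- The edges of `G(Π)`: the star at `s`, the triangles on `U^C`, the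
matchings `E^C`, and the cycles `Δ_x` (which alternate `v`-vertices of
original-clause gadgets and of copy gadgets; the cycle for the variable `x`
is `v p₁ false, v p₁ true, v p₂ false, v p₂ true, …` over the occurrences
`p₁, p₂, …` of `x` in cyclic order). -/
inductive EdgeSpec {α : Type*} [DecidableEq α] {n : ℕ} (cl : Fin n → Fin 3 → α) :
    GVert n → GVert n → Prop
  | star (i : Fin n) (o : Bool) (j : Fin 3) : EdgeSpec cl .s (.u i o j)
  | tri (i : Fin n) (o : Bool) {j j' : Fin 3} (h : j ≠ j') :
      EdgeSpec cl (.u i o j) (.u i o j')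
  | mat (i : Fin n) (o : Bool) (j : Fin 3) : EdgeSpec cl (.u i o j) (.v i o j)
  | cycA (p : Fin n × Fin 3) : EdgeSpec cl (.v p.1 false p.2) (.v p.1 true p.2)
  | cycB (p : Fin n × Fin 3) :
      EdgeSpec cl (.v p.1 true p.2) (.v (nextOcc cl p).1 false (nextOcc cl p).2)

/-- The graph `G(Π)` associated to the NotAllEqual 3-SAT instance. -/
noncomputable def gadgetGraph {α : Type*} [DecidableEq α] {n : ℕ}
    (cl : Fin n → Fin 3 → α) : SimpleGraph (GVert n) :=
  SimpleGraph.fromRel (EdgeSpec cl)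

/-- The blue outdegree prescription `b`. -/
def bvec (n : ℕ) : GVert n → ℕ
  | .s => 3 * n
  | .u _ _ _ => 1
  | .v _ o _ => if o then 0 else 1

/-- The red outdegree prescription `r`. -/
def rvec (n : ℕ) : GVert n → ℕ
  | .s => 3 * n
  | .u _ _ _ => 1
  | .v _ o _ => if o then 1 else 0

/-- `dir` is an orientation of the edge set `F`: every directed pair lies in
`F`, and every edge of `F` gets exactly one direction. -/
def IsOrientation {V : Type*} (F : Set (Sym2 V)) (dir : V → V → Prop) : Prop :=
  (∀ a b, dir a b → s(a, b) ∈ F) ∧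
    ∀ a b, s(a, b) ∈ F → (dir a b ∨ dir b a) ∧ ¬(dir a b ∧ dir b a)

/-- `dir` is an `m`-orientation of `F`: an orientation in which exactly `m v`
arcs leave each vertex `v`. -/
def IsMOrientation {V : Type*} (F : Set (Sym2 V)) (m : V → ℕ)
    (dir : V → V → Prop) : Prop :=
  IsOrientation F dir ∧ ∀ v, Nat.card {w // dir v w} = m v

/-- `B` and `R` partition the edges of `G` into two spanning trees. -/
def IsTreePartition {V : Type*} (G B R : SimpleGraph V) : Prop :=
  B ≤ G ∧ R ≤ G ∧ B.IsTree ∧ R.IsTree ∧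
    Disjoint B.edgeSet R.edgeSet ∧ B.edgeSet ∪ R.edgeSet = G.edgeSet

/-- `(B, R)` is a `(b,r)`-partition of (the edge set of) `G`: a partition
into a blue spanning tree having a `b`-orientation and a red spanning tree
having an `r`-orientation. -/
def IsBRPartition {V : Type*} (G : SimpleGraph V) (b r : V → ℕ)
    (B R : SimpleGraph V) : Prop :=
  IsTreePartition G B R ∧
    (∃ d, IsMOrientation B.edgeSet b d) ∧ ∃ d, IsMOrientation R.edgeSet r d

/-- `G` admits some `(b,r)`-partition. -/
def HasBRPartition {V : Type*} (G : SimpleGraph V) (b r : V → ℕ) : Prop :=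
  ∃ B R, IsBRPartition G b r B R

/-- The blue/red coloring `c` (`true` = blue, `false` = red) satisfies the
NotAllEqual 3-SAT instance: every clause contains a blue and a red variable. -/
def NAESatisfies {α : Type*} {n : ℕ} (cl : Fin n → Fin 3 → α) (c : α → Bool) :
    Prop :=
  ∀ i : Fin n, (∃ j, c (cl i j) = true) ∧ ∃ j, c (cl i j) = false

/-- The matching edge `u^C_x v^C_x` at occurrence `p`, in the original gadget
(`o = false`) or the copy gadget (`o = true`). -/
def mEdge {n : ℕ} (p : Fin n × Fin 3) (o : Bool) : Sym2 (GVert n) :=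
  s(GVert.u p.1 o p.2, GVert.v p.1 o p.2)

/-!
The `v`-vertices of original gadgets have red outdegree 0 and blue outdegree 1, those of copy
gadgets the reverse. Hence the two edges of `Δ_x` at a copy vertex are not both red, since both
would leave it, and likewise the two edges at an original vertex are not both blue. (`Δ_x` is not
a single edge: two adjacent vertices of degree 2 cannot lie in two edge-disjoint spanning trees.)
Going once around the cycle, there is at least one blue edge at each copy vertex and at most one
at each original vertex; as there are equally many of both, the colours alternate along `Δ_x`.

Consequently, for an edge `ab` of `Δ_x`, the tree of its colour can leave `{a, b}` only through
the matching edges at `a` and `b`, so one of them has the colour of `ab`. Applied to the edges of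
`Δ_x` in turn, the same counting around the cycle shows that the matching edges alternate in
colour along `Δ_x`.
-/

theorem Function.Injective.iff_not_of_forall_or_of_forall_not_and {ι : Type*} [Finite ι]
    {σ : ι → ι} (hσ : σ.Injective) {P Q : ι → Prop} (hor : ∀ i, P i ∨ Q i)
    (hnand : ∀ i, ¬(Q i ∧ P (σ i))) (i : ι) : (P i ↔ ¬Q i) ∧ (Q i ↔ ¬P (σ i)) := by
  classical
  have := Fintype.ofFinite ι
  let f i := (if P i then 1 else 0) + if Q i then 1 else 0
  let g i := (if Q i then 1 else 0) + if P (σ i) then 1 else 0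
  have hf : ∀ i, 1 ≤ f i := fun i => by rcases hor i with h | h <;> simp [f, h]
  have hg : ∀ i, g i ≤ 1 := fun i => by
    by_cases hQ : Q i <;> by_cases hP : P (σ i) <;> simp_all [g]
  have hfg : ∑ i, f i = ∑ i, g i := by
    simp only [f, g, Finset.sum_add_distrib, (Finite.injective_iff_bijective.1 hσ).sum_comp
      (fun i => if P i then 1 else 0)]
    ring
  have hsum : ∑ i, f i = ∑ _i : ι, 1 :=
    le_antisymm (hfg ▸ Finset.sum_le_sum fun i _ => hg i) (Finset.sum_le_sum fun i _ => hf i)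
  have hf1 := (Finset.sum_eq_sum_iff_of_le fun i _ => hf i).1 hsum.symm i (Finset.mem_univ i)
  have hg1 := (Finset.sum_eq_sum_iff_of_le fun i _ => hg i).1 (hfg ▸ hsum) i (Finset.mem_univ i)
  by_cases hP : P i <;> by_cases hQ : Q i <;> by_cases hP' : P (σ i) <;>
    simp [f, g, hP, hQ, hP'] at hf1 hg1 ⊢

theorem SimpleGraph.Connected.eq_or_eq_of_forall_adj {V : Type*} {G : SimpleGraph V}
    (hG : G.Connected) {a b : V} (ha : ∀ z, G.Adj a z → z = b) (hb : ∀ z, G.Adj b z → z = a)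
    (c : V) : c = a ∨ c = b := by
  obtain ⟨w⟩ := hG.preconnected a c
  suffices ∀ {x y} (w : G.Walk x y), x = a ∨ x = b → y = a ∨ y = b from this w (.inl rfl)
  intro x y w
  induction w with
  | nil => exact id
  | cons h _ ih => rintro (rfl | rfl); exacts [ih (.inr (ha _ h)), ih (.inl (hb _ h))]

theorem IsMOrientation.eq_of_mem_of_mem {V : Type*} [Finite V] {F : Set (Sym2 V)} {m : V → ℕ}
    {d : V → V → Prop} (h : IsMOrientation F m d) {a b c : V} (ha : m a = 1) (hb : m b = 0)
    (hc : m c = 0) (hab : s(a, b) ∈ F) (hac : s(a, c) ∈ F) : b = c := by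
  have dir_of_eq_zero : ∀ {w}, m w = 0 → s(a, w) ∈ F → d a w := fun hw haw =>
    (h.1.2 _ _ haw).1.resolve_right fun hwa =>
      (Finite.card_eq_zero_iff.1 ((h.2 _).trans hw)).false ⟨a, hwa⟩
  obtain ⟨z, hz⟩ := Nat.card_eq_one_iff_exists.1 ((h.2 a).trans ha)
  exact congrArg Subtype.val
    ((hz ⟨b, dir_of_eq_zero hb hab⟩).trans (hz ⟨c, dir_of_eq_zero hc hac⟩).symm)

namespace IsTreePartition

variable {V : Type*} {G T T' : SimpleGraph V}

theorem symm (h : IsTreePartition G T T') : IsTreePartition G T' T := by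
  obtain ⟨hT, hT', hTt, hT't, hdisj, hunion⟩ := h
  exact ⟨hT', hT, hT't, hTt, hdisj.symm, Set.union_comm _ _ ▸ hunion⟩

theorem notMem_left_iff (h : IsTreePartition G T T') {e : Sym2 V} (he : e ∈ G.edgeSet) :
    e ∉ T.edgeSet ↔ e ∈ T'.edgeSet := by
  rw [← h.2.2.2.2.2] at he
  exact ⟨he.resolve_left, fun he' => Set.disjoint_right.1 h.2.2.2.2.1 he'⟩

theorem exists_connected_mem_iff (h : IsTreePartition G T T') (c : Prop) :
    ∃ S ≤ G, S.Connected ∧ ∀ e ∈ G.edgeSet, e ∈ S.edgeSet ↔ (e ∈ T.edgeSet ↔ c) := by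
  by_cases hc : c
  · exact ⟨T, h.1, h.2.2.1.connected, fun e _ => by simp [hc]⟩
  · exact ⟨T', h.2.1, h.2.2.2.1.connected, fun e he => by simp [hc, h.notMem_left_iff he]⟩

/-- Two adjacent vertices with only one further neighbour each: the tree avoiding the edge `ab`
needs both outer edges, leaving none for the other tree. -/
theorem false_of_forall_adj (h : IsTreePartition G T T') {a b a' b' c : V} (hab : G.Adj a b)
    (ha : ∀ z, G.Adj a z → z = a' ∨ z = b) (hb : ∀ z, G.Adj b z → z = b' ∨ z = a)
    (hca : c ≠ a) (hcb : c ≠ b) : False := by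
  wlog hT : T.Adj a b generalizing T T'
  · exact this h.symm ((h.notMem_left_iff (G.mem_edgeSet.2 hab)).1 hT)
  obtain ⟨hTG, hT'G, hTt, hT't, hdisj, -⟩ := h
  have hdisj' : ∀ {u v}, T.Adj u v → ¬T'.Adj u v := fun h =>
    Set.disjoint_left.1 hdisj (T.mem_edgeSet.2 h)
  have hT' : ¬T'.Adj a b := hdisj' hT
  have ha' : T'.Adj a a' := by
    obtain ⟨z, hz⟩ := (hT't.connected.preconnected a c).nonempty_neighborSet_left hca.symm
    rcases ha z (hT'G hz) with rfl | rfl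
    exacts [hz, absurd hz hT']
  have hb' : T'.Adj b b' := by
    obtain ⟨z, hz⟩ := (hT't.connected.preconnected b c).nonempty_neighborSet_left hcb.symm
    rcases hb z (hT'G hz) with rfl | rfl
    exacts [hz, absurd hz.symm hT']
  refine (hTt.connected.eq_or_eq_of_forall_adj (fun z hz => ?_) (fun z hz => ?_) c).elim
    hca hcb
  · rcases ha z (hTG hz) with rfl | rfl
    exacts [absurd ha' (hdisj' hz), rfl]
  · rcases hb z (hTG hz) with rfl | rfl
    exacts [absurd hb' (hdisj' hz), rfl]

end IsTreePartition

instance GVert.instFinite (n : ℕ) : Finite (GVert n) :=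
  Finite.of_injective (β := Option (Bool × Fin n × Bool × Fin 3))
    (fun | .s => none | .u i o j => some (false, i, o, j) | .v i o j => some (true, i, o, j))
    (by rintro (_ | ⟨_, _, _⟩ | ⟨_, _, _⟩) (_ | ⟨_, _, _⟩ | ⟨_, _, _⟩) h <;> simp_all)

def vOcc {n : ℕ} (q : Fin n × Fin 3) (o : Bool) : GVert n := .v q.1 o q.2

/-- The edge `cycA q` of `Δ_x`. -/
def pairEdge {n : ℕ} (q : Fin n × Fin 3) : Sym2 (GVert n) := s(vOcc q false, vOcc q true)

/-- The edge `cycB q` of `Δ_x`. -/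
noncomputable def linkEdge {α : Type*} [DecidableEq α] {n : ℕ} (cl : Fin n → Fin 3 → α)
    (q : Fin n × Fin 3) : Sym2 (GVert n) :=
  s(vOcc q true, vOcc (nextOcc cl q) false)

section Gadget

variable {α : Type*} [DecidableEq α] {n : ℕ} {cl : Fin n → Fin 3 → α}

theorem vOcc_inj {p q : Fin n × Fin 3} {o : Bool} : vOcc p o = vOcc q o ↔ p = q := by
  simp [vOcc, Prod.ext_iff]

theorem nextOcc_eq_next {x : α} {p : Fin n × Fin 3} (hp : p ∈ occs cl x) :
    nextOcc cl p = (occs cl x).toList.next p (Finset.mem_toList.2 hp) := by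
  obtain rfl : cl p.1 p.2 = x := (Finset.mem_filter.1 hp).2
  rfl

theorem cl_nextOcc (p : Fin n × Fin 3) : cl (nextOcc cl p).1 (nextOcc cl p).2 = cl p.1 p.2 := by
  have h : nextOcc cl p ∈ occs cl (cl p.1 p.2) := Finset.mem_toList.1 (List.next_mem _ _ _)
  exact (Finset.mem_filter.1 h).2

theorem nextOcc_injective : Function.Injective (nextOcc cl) := by
  intro p q h
  have hp : p ∈ occs cl (cl p.1 p.2) := by simp [occs]
  have hq : q ∈ occs cl (cl p.1 p.2) := by simp [occs, ← cl_nextOcc q, ← h, cl_nextOcc]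
  rw [nextOcc_eq_next hp, nextOcc_eq_next hq] at h
  rw [← List.prev_next _ (Finset.nodup_toList _) p (Finset.mem_toList.2 hp),
    ← List.prev_next _ (Finset.nodup_toList _) q (Finset.mem_toList.2 hq)]
  congr 1

theorem pairEdge_mem_edgeSet (q : Fin n × Fin 3) : pairEdge q ∈ (gadgetGraph cl).edgeSet :=
  (SimpleGraph.fromRel_adj _ _ _).2 ⟨by simp [vOcc], .inl (.cycA q)⟩

theorem linkEdge_mem_edgeSet (q : Fin n × Fin 3) : linkEdge cl q ∈ (gadgetGraph cl).edgeSet :=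
  (SimpleGraph.fromRel_adj _ _ _).2 ⟨by simp [vOcc], .inl (.cycB q)⟩

theorem mEdge_mem_edgeSet (q : Fin n × Fin 3) (o : Bool) :
    mEdge q o ∈ (gadgetGraph cl).edgeSet :=
  (SimpleGraph.fromRel_adj _ _ _).2 ⟨by simp, .inl (.mat q.1 o q.2)⟩

theorem gadgetGraph_adj_vOcc_false {q : Fin n × Fin 3} {z : GVert n}
    (h : (gadgetGraph cl).Adj (vOcc q false) z) :
    z = .u q.1 false q.2 ∨ z = vOcc q true ∨ ∃ p, nextOcc cl p = q ∧ z = vOcc p true := by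
  obtain ⟨i, j⟩ := q
  obtain ⟨-, h | h⟩ := (SimpleGraph.fromRel_adj _ _ _).1 h
  · cases h
    exact .inr (.inl rfl)
  · cases h with
    | mat => exact .inl rfl
    | cycB p => exact .inr (.inr ⟨p, rfl, rfl⟩)

theorem gadgetGraph_adj_vOcc_true {q : Fin n × Fin 3} {z : GVert n}
    (h : (gadgetGraph cl).Adj (vOcc q true) z) :
    z = .u q.1 true q.2 ∨ z = vOcc q false ∨ z = vOcc (nextOcc cl q) false := by
  obtain ⟨i, j⟩ := q
  obtain ⟨-, h | h⟩ := (SimpleGraph.fromRel_adj _ _ _).1 h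
  · cases h
    exact .inr (.inr rfl)
  · cases h with
    | mat => exact .inl rfl
    | cycA p => exact .inr (.inl rfl)

variable {B R T T' : SimpleGraph (GVert n)}

theorem nextOcc_ne_self (hP : IsTreePartition (gadgetGraph cl) T T') (q : Fin n × Fin 3) :
    nextOcc cl q ≠ q := by
  intro hq
  refine hP.false_of_forall_adj (pairEdge_mem_edgeSet q) (fun z hz => ?_) (fun z hz => ?_)
    (a' := .u q.1 false q.2) (b' := .u q.1 true q.2) (c := .s) (by simp [vOcc]) (by simp [vOcc])
  · rcases gadgetGraph_adj_vOcc_false hz with h | h | ⟨p, hp, rfl⟩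
    · exact .inl h
    · exact .inr h
    · rw [nextOcc_injective (hp.trans hq.symm)]
      exact .inr rfl
  · rcases gadgetGraph_adj_vOcc_true hz with h | h | h
    · exact .inl h
    · exact .inr h
    · rw [h, hq]
      exact .inr rfl

theorem not_connected_of_pairEdge_cut (hT : T ≤ gadgetGraph cl) (q : Fin n × Fin 3)
    (hf : mEdge q false ∉ T.edgeSet) (ht : mEdge q true ∉ T.edgeSet)
    (hl : linkEdge cl q ∉ T.edgeSet)
    (hl' : ∀ p, nextOcc cl p = q → linkEdge cl p ∉ T.edgeSet) : ¬T.Connected := by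
  intro hTc
  have := hTc.eq_or_eq_of_forall_adj (a := vOcc q false) (b := vOcc q true)
    (fun z hz => ?_) (fun z hz => ?_) .s
  · simp [vOcc] at this
  · rcases gadgetGraph_adj_vOcc_false (hT hz) with rfl | rfl | ⟨p, rfl, rfl⟩
    · exact absurd hz.symm hf
    · rfl
    · exact absurd hz.symm (hl' p rfl)
  · rcases gadgetGraph_adj_vOcc_true (hT hz) with rfl | rfl | rfl
    · exact absurd hz.symm ht
    · rfl
    · exact absurd hz hl

theorem not_connected_of_linkEdge_cut (hT : T ≤ gadgetGraph cl) (q : Fin n × Fin 3)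
    (ht : mEdge q true ∉ T.edgeSet) (hf : mEdge (nextOcc cl q) false ∉ T.edgeSet)
    (hp : pairEdge q ∉ T.edgeSet) (hp' : pairEdge (nextOcc cl q) ∉ T.edgeSet) :
    ¬T.Connected := by
  intro hTc
  have := hTc.eq_or_eq_of_forall_adj (a := vOcc q true) (b := vOcc (nextOcc cl q) false)
    (fun z hz => ?_) (fun z hz => ?_) .s
  · simp [vOcc] at this
  · rcases gadgetGraph_adj_vOcc_true (hT hz) with rfl | rfl | rfl
    · exact absurd hz.symm ht
    · exact absurd hz.symm hp
    · rfl
  · rcases gadgetGraph_adj_vOcc_false (hT hz) with rfl | rfl | ⟨p, hpq, rfl⟩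
    · exact absurd hz.symm hf
    · exact absurd hz hp'
    · rw [nextOcc_injective hpq]

theorem pairEdge_mem_iff (hBR : IsBRPartition (gadgetGraph cl) (bvec n) (rvec n) B R)
    (q : Fin n × Fin 3) :
    (pairEdge q ∈ B.edgeSet ↔ linkEdge cl q ∉ B.edgeSet) ∧
      (linkEdge cl q ∈ B.edgeSet ↔ pairEdge (nextOcc cl q) ∉ B.edgeSet) := by
  obtain ⟨hP, ⟨_, hdB⟩, _, hdR⟩ := hBR
  refine (nextOcc_injective (cl := cl)).iff_not_of_forall_or_of_forall_not_and
    (P := fun q => pairEdge q ∈ B.edgeSet) (Q := fun q => linkEdge cl q ∈ B.edgeSet)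
    (fun q => ?_) (fun q => ?_) q
  · by_contra! h
    rw [hP.notMem_left_iff (pairEdge_mem_edgeSet q),
      hP.notMem_left_iff (linkEdge_mem_edgeSet q), pairEdge, Sym2.eq_swap] at h
    exact nextOcc_ne_self hP q (vOcc_inj.1 (hdR.eq_of_mem_of_mem rfl rfl rfl h.1 h.2)).symm
  · rintro ⟨hl, hp⟩
    rw [linkEdge, Sym2.eq_swap] at hl
    exact nextOcc_ne_self hP q (vOcc_inj.1 (hdB.eq_of_mem_of_mem rfl rfl rfl hl hp)).symm

theorem mEdge_mem_iff (hBR : IsBRPartition (gadgetGraph cl) (bvec n) (rvec n) B R)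
    (q : Fin n × Fin 3) :
    (mEdge q false ∈ B.edgeSet ↔ mEdge q true ∉ B.edgeSet) ∧
      (mEdge q true ∈ B.edgeSet ↔ mEdge (nextOcc cl q) false ∉ B.edgeSet) := by
  have hP := hBR.1
  have hcyc := pairEdge_mem_iff hBR
  have hor : ∀ q, (mEdge q false ∈ B.edgeSet ↔ pairEdge q ∈ B.edgeSet) ∨
      (mEdge q true ∈ B.edgeSet ↔ pairEdge q ∈ B.edgeSet) := by
    intro q
    by_contra! h
    obtain ⟨T, hTG, hTc, hT⟩ := hP.exists_connected_mem_iff (pairEdge q ∈ B.edgeSet)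
    refine not_connected_of_pairEdge_cut hTG q ?_ ?_ ?_ (fun p hp => ?_) hTc
    · rw [hT _ (mEdge_mem_edgeSet _ _)]; tauto
    · rw [hT _ (mEdge_mem_edgeSet _ _)]; tauto
    · rw [hT _ (linkEdge_mem_edgeSet _)]; have := hcyc q; tauto
    · rw [hT _ (linkEdge_mem_edgeSet _)]; have := hcyc p; rw [hp] at this; tauto
  have hnand : ∀ q, ¬((mEdge q true ∈ B.edgeSet ↔ pairEdge q ∈ B.edgeSet) ∧
      (mEdge (nextOcc cl q) false ∈ B.edgeSet ↔ pairEdge (nextOcc cl q) ∈ B.edgeSet)) := by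
    rintro q ⟨ht, hf⟩
    obtain ⟨T, hTG, hTc, hT⟩ := hP.exists_connected_mem_iff (linkEdge cl q ∈ B.edgeSet)
    have := hcyc q
    refine not_connected_of_linkEdge_cut hTG q ?_ ?_ ?_ ?_ hTc
    · rw [hT _ (mEdge_mem_edgeSet _ _)]; tauto
    · rw [hT _ (mEdge_mem_edgeSet _ _)]; tauto
    · rw [hT _ (pairEdge_mem_edgeSet _)]; tauto
    · rw [hT _ (pairEdge_mem_edgeSet _)]; tauto
  have := nextOcc_injective.iff_not_of_forall_or_of_forall_not_and hor hnand q
  have := hcyc q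
  have := hcyc (nextOcc cl q)
  grind

end Gadget

theorem stmt13_general {α : Type*} [DecidableEq α] {n : ℕ} (cl : Fin n → Fin 3 → α)
    (B R : SimpleGraph (GVert n))
    (hBR : IsBRPartition (gadgetGraph cl) (bvec n) (rvec n) B R) :
    ∀ x : α, ∀ p ∈ occs cl x,
      (mEdge p false ∈ B.edgeSet ↔ mEdge p true ∈ R.edgeSet) ∧
      (mEdge p true ∈ B.edgeSet ↔ mEdge (nextOcc cl p) false ∈ R.edgeSet) := by
  intro _ p _
  simpa only [hBR.1.notMem_left_iff (mEdge_mem_edgeSet (cl := cl) _ _)] using mEdge_mem_iff hBR p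

/-- In every `(b,r)`-partition of `G(Π)`, for every variable
`x` and any two consecutive `v`-vertices on the cycle `Δ_x` (one from an
original-clause gadget and one from a copy gadget), the matching edges
attached to them belong to different spanning trees. The consecutive pairs on
`Δ_x` are `(v p false, v p true)` and `(v p true, v (nextOcc p) false)` for
occurrences `p` of `x`. -/
theorem stmt13 {α : Type*} [DecidableEq α] {n : ℕ} (cl : Fin n → Fin 3 → α)
    (hcl : ∀ i, Function.Injective (cl i)) (B R : SimpleGraph (GVert n))
    (hBR : IsBRPartition (gadgetGraph cl) (bvec n) (rvec n) B R) :
    ∀ x : α, ∀ p ∈ occs cl x,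
      (mEdge p false ∈ B.edgeSet ↔ mEdge p true ∈ R.edgeSet) ∧
      (mEdge p true ∈ B.edgeSet ↔ mEdge (nextOcc cl p) false ∈ R.edgeSet) :=
  stmt13_general cl B R hBR
end

section
/- Let Π be an instance of NotAllEqual 3-SAT with n clauses and G(Π)=(V,E), b, r the associated construction. In every (b,r)-partition of E, with any b-orientation of the blue tree and r-orientation of the red tree, for every variable x, every arc corresponding to a matching edge u^C_x v^C_x or u^{C'}_x v^{C'}_x (for C a clause containing x) is oriented toward its endpoint on the cycle Δ_x, i.e., it enters Δ_x. -/
/-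
Let `W` be `s` together with all `u`-vertices. The blue and red arcs with tail in `W` number
`∑_{w ∈ W} (b w + r w) = 6n + 12n = 18n`, and each of them lies on a distinct edge of `G(Π)`
meeting `W`. There are only `18n` such edges (`6n` star edges, `6n` triangle edges, `6n`
matching edges), so every one of them is oriented out of `W`; for a matching edge this
means from `u` to `v`.
-/

open Finset

section Orientation

variable {V : Type*} {F F₁ F₂ : Set (Sym2 V)} {m m₁ m₂ : V → ℕ}
  {d d₁ d₂ : V → V → Prop}

theorem IsOrientation.or (h₁ : IsOrientation F₁ d₁) (h₂ : IsOrientation F₂ d₂)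
    (hF : Disjoint F₁ F₂) :
    IsOrientation (F₁ ∪ F₂) (fun a b => d₁ a b ∨ d₂ a b) := by
  obtain ⟨hd₁, hanti₁⟩ := h₁
  obtain ⟨hd₂, hanti₂⟩ := h₂
  have not₂ : ∀ a b, s(a, b) ∈ F₁ → ¬d₂ a b := fun a b h h' =>
    Set.disjoint_left.mp hF h (hd₂ a b h')
  have not₁ : ∀ a b, s(a, b) ∈ F₂ → ¬d₁ a b := fun a b h h' =>
    Set.disjoint_left.mp hF (hd₁ a b h') h
  refine ⟨fun a b h => h.elim (fun h => Or.inl (hd₁ a b h)) (fun h => Or.inr (hd₂ a b h)),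
    fun a b hab => ?_⟩
  have hba : s(b, a) = s(a, b) := Sym2.eq_swap
  rcases hab with hab | hab
  · have := hanti₁ a b hab
    have := not₂ a b hab
    have := not₂ b a (hba ▸ hab)
    tauto
  · have := hanti₂ a b hab
    have := not₁ a b hab
    have := not₁ b a (hba ▸ hab)
    tauto

theorem IsMOrientation.or [Fintype V] (h₁ : IsMOrientation F₁ m₁ d₁)
    (h₂ : IsMOrientation F₂ m₂ d₂) (hF : Disjoint F₁ F₂) :
    IsMOrientation (F₁ ∪ F₂) (m₁ + m₂) (fun a b => d₁ a b ∨ d₂ a b) := by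
  classical
  refine ⟨h₁.1.or h₂.1 hF, fun v => ?_⟩
  have hdisj : Disjoint (d₁ v) (d₂ v) := fun p hp₁ hp₂ z hz =>
    Set.disjoint_left.mp hF (h₁.1.1 v z (hp₁ z hz)) (h₂.1.1 v z (hp₂ z hz))
  simp only [Nat.card_eq_fintype_card, Pi.add_apply, ← h₁.2 v, ← h₂.2 v]
  exact Fintype.card_subtype_or_disjoint _ _ hdisj

theorem IsMOrientation.rel_of_card_le_sum [Fintype V] [DecidableEq V]
    (hd : IsMOrientation F m d) {W : Finset V} {T : Finset (Sym2 V)}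
    (hT : ∀ a ∈ W, ∀ z, s(a, z) ∈ F → s(a, z) ∈ T) (hcard : #T ≤ ∑ w ∈ W, m w)
    {a b : V} (ha : a ∈ W) (hb : b ∉ W) (hab : s(a, b) ∈ T) : d a b := by
  classical
  obtain ⟨⟨hdF, hanti⟩, hdeg⟩ := hd
  by_contra hnot
  set A := (W ×ˢ univ).filter fun q : V × V => d q.1 q.2
  have hA : #A = ∑ w ∈ W, m w := by
    rw [card_filter, sum_product]
    refine sum_congr rfl fun w _ => ?_
    rw [← hdeg w, Nat.card_eq_fintype_card, Fintype.card_subtype, card_filter]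
  have hmaps : Set.MapsTo (fun q : V × V => s(q.1, q.2)) A (T.erase s(a, b)) := by
    rintro ⟨w, z⟩ hq
    simp only [A, coe_filter, mem_product, mem_univ, and_true, Set.mem_ofPred_eq] at hq
    refine mem_erase.mpr ⟨fun he => ?_, hT w hq.1 z (hdF w z hq.2)⟩
    rcases Sym2.eq_iff.mp he with ⟨rfl, rfl⟩ | ⟨rfl, -⟩
    exacts [hnot hq.2, hb hq.1]
  have hinj : Set.InjOn (fun q : V × V => s(q.1, q.2)) A := by
    rintro ⟨w, z⟩ hq ⟨w', z'⟩ hq' he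
    simp only [A, coe_filter, mem_product, mem_univ, and_true, Set.mem_ofPred_eq] at hq hq'
    rcases Sym2.eq_iff.mp he with ⟨rfl, rfl⟩ | ⟨rfl, rfl⟩
    · rfl
    · exact absurd ⟨hq.2, hq'.2⟩ (hanti w z (hdF w z hq.2)).2
  have hle := card_le_card_of_injOn _ hmaps hinj
  rw [card_erase_of_mem hab, hA] at hle
  have := card_pos.mpr ⟨_, hab⟩
  omega

end Orientation

section Gadget

variable {n : ℕ}

instance : Fintype (GVert n) where
  elems := {.s} ∪ univ.image (fun q : Fin n × Bool × Fin 3 => .u q.1 q.2.1 q.2.2) ∪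
    univ.image (fun q : Fin n × Bool × Fin 3 => .v q.1 q.2.1 q.2.2)
  complete := by rintro (_ | ⟨i, o, j⟩ | ⟨i, o, j⟩) <;> simp

variable (n) in
def starVerts : Finset (GVert n) :=
  insert .s (univ.image fun q : (Fin n × Fin 3) × Bool => .u q.1.1 q.2 q.1.2)

variable (n) in
def edgesAtStarVerts : Finset (Sym2 (GVert n)) :=
  univ.image (fun q : (Fin n × Fin 3) × Bool => s(.s, .u q.1.1 q.2 q.1.2)) ∪
    univ.image (fun q : (Fin n × Fin 3) × Bool =>
      s(.u q.1.1 q.2 q.1.2, .u q.1.1 q.2 (q.1.2 + 1))) ∪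
    univ.image (fun q : (Fin n × Fin 3) × Bool => mEdge q.1 q.2)

theorem card_edgesAtStarVerts_le : #(edgesAtStarVerts n) ≤ 18 * n := by
  have h : ∀ f : (Fin n × Fin 3) × Bool → Sym2 (GVert n), #(univ.image f) ≤ 6 * n := by
    intro f
    refine (card_image_le).trans_eq ?_
    simp only [card_univ, Fintype.card_prod, Fintype.card_fin, Fintype.card_bool]
    ring
  unfold edgesAtStarVerts
  grw [card_union_le, card_union_le, h, h, h]
  omega

theorem sum_starVerts_bvec_add_rvec : ∑ w ∈ starVerts n, (bvec n + rvec n) w = 18 * n := by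
  rw [starVerts, sum_insert (by simp), sum_image fun _ _ _ _ h => by
    injection h with h₁ h₂ h₃; exact Prod.ext (Prod.ext h₁ h₃) h₂]
  simp only [Pi.add_apply, bvec, rvec, sum_const, card_univ, Fintype.card_prod,
    Fintype.card_fin, Fintype.card_bool, smul_eq_mul]
  ring

theorem mEdge_mem_edgesAtStarVerts (p : Fin n × Fin 3) (o : Bool) :
    mEdge p o ∈ edgesAtStarVerts n :=
  mem_union_right _ (mem_image_of_mem (fun q : (Fin n × Fin 3) × Bool => mEdge q.1 q.2)
    (mem_univ (p, o)))

theorem Fin.three_eq_add_one_or_eq_add_one {j j' : Fin 3} (h : j ≠ j') :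
    j' = j + 1 ∨ j = j' + 1 := by
  revert j j'; decide

theorem mem_edgesAtStarVerts_of_edgeSpec {α : Type*} [DecidableEq α] {cl : Fin n → Fin 3 → α}
    {a z : GVert n} (h : EdgeSpec cl a z) (ha : a ∈ starVerts n ∨ z ∈ starVerts n) :
    s(a, z) ∈ edgesAtStarVerts n := by
  simp only [edgesAtStarVerts, mem_union, mem_image, mem_univ, true_and]
  cases h with
  | star i o j => exact Or.inl (Or.inl ⟨((i, j), o), rfl⟩)
  | tri i o hj =>
    rcases Fin.three_eq_add_one_or_eq_add_one hj with rfl | rfl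
    · exact Or.inl (Or.inr ⟨((i, _), o), rfl⟩)
    · exact Or.inl (Or.inr ⟨((i, _), o), Sym2.eq_swap⟩)
  | mat i o j => exact Or.inr ⟨((i, j), o), rfl⟩
  | cycA p | cycB p => simp [starVerts] at ha

theorem mem_edgesAtStarVerts_of_adj {α : Type*} [DecidableEq α] {cl : Fin n → Fin 3 → α}
    {a z : GVert n} (ha : a ∈ starVerts n) (h : (gadgetGraph cl).Adj a z) :
    s(a, z) ∈ edgesAtStarVerts n := by
  rcases ((SimpleGraph.fromRel_adj _ _ _).mp h).2 with h | h
  · exact mem_edgesAtStarVerts_of_edgeSpec h (Or.inl ha)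
  · exact Sym2.eq_swap ▸ mem_edgesAtStarVerts_of_edgeSpec h (Or.inr ha)

end Gadget

theorem stmt14_general {α : Type*} [DecidableEq α] {n : ℕ} (cl : Fin n → Fin 3 → α)
    (B R : SimpleGraph (GVert n))
    (hpart : IsTreePartition (gadgetGraph cl) B R)
    (db dr : GVert n → GVert n → Prop)
    (hb : IsMOrientation B.edgeSet (bvec n) db)
    (hr : IsMOrientation R.edgeSet (rvec n) dr) :
    ∀ x : α, ∀ p ∈ occs cl x, ∀ o : Bool,
      (mEdge p o ∈ B.edgeSet → db (GVert.u p.1 o p.2) (GVert.v p.1 o p.2)) ∧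
      (mEdge p o ∈ R.edgeSet → dr (GVert.u p.1 o p.2) (GVert.v p.1 o p.2)) := by
  intro _ p _ o
  obtain ⟨hBG, hRG, -, -, hdisj, -⟩ := hpart
  have hW : ∀ a ∈ starVerts n, ∀ z, s(a, z) ∈ B.edgeSet ∪ R.edgeSet →
      s(a, z) ∈ edgesAtStarVerts n := fun a ha z hz =>
    mem_edgesAtStarVerts_of_adj (cl := cl) ha (hz.elim (fun h => hBG h) (fun h => hRG h))
  have hcard : #(edgesAtStarVerts n) ≤ ∑ w ∈ starVerts n, (bvec n + rvec n) w :=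
    sum_starVerts_bvec_add_rvec.symm ▸ card_edgesAtStarVerts_le
  have hout : db (.u p.1 o p.2) (.v p.1 o p.2) ∨ dr (.u p.1 o p.2) (.v p.1 o p.2) :=
    (hb.or hr hdisj).rel_of_card_le_sum hW hcard (by simp [starVerts]) (by simp [starVerts])
      (mEdge_mem_edgesAtStarVerts p o)
  exact ⟨fun hB => hout.resolve_right fun h => Set.disjoint_left.mp hdisj hB (hr.1.1 _ _ h),
    fun hR => hout.resolve_left fun h => Set.disjoint_left.mp hdisj (hb.1.1 _ _ h) hR⟩

/-- In every `(b,r)`-partition of `G(Π)`, with any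
`b`-orientation of the blue tree and `r`-orientation of the red tree, for
every variable `x` every matching arc `u^C_x v^C_x` or `u^{C'}_x v^{C'}_x`
(over clauses `C` containing `x`) is oriented towards its endpoint on the
cycle `Δ_x`, i.e. it enters `Δ_x`. -/
theorem stmt14 {α : Type*} [DecidableEq α] {n : ℕ} (cl : Fin n → Fin 3 → α)
    (hcl : ∀ i, Function.Injective (cl i)) (B R : SimpleGraph (GVert n))
    (hpart : IsTreePartition (gadgetGraph cl) B R)
    (db dr : GVert n → GVert n → Prop)
    (hb : IsMOrientation B.edgeSet (bvec n) db)
    (hr : IsMOrientation R.edgeSet (rvec n) dr) :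
    ∀ x : α, ∀ p ∈ occs cl x, ∀ o : Bool,
      (mEdge p o ∈ B.edgeSet → db (GVert.u p.1 o p.2) (GVert.v p.1 o p.2)) ∧
      (mEdge p o ∈ R.edgeSet → dr (GVert.u p.1 o p.2) (GVert.v p.1 o p.2)) :=
  stmt14_general cl B R hpart db dr hb hr
end
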